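/- Let F : C ⥤ X be a faithful essential localization such that: every pullback stable essential monomorphism in X is an isomorphism; every pushout stable essential epimorphism in X is an isomorphism; and X is balanced. Then the opposite functor F^op : C^op ⥤ X^op is a localization functor (in the sense of categories of fractions) of C^op with respect to the class of pullback stable essential monomorphisms of C^op; consequently Spec(C) ≃ X and Spec(C^op) ≃ X^op, so Spec(C) ≃ Spec(C^op)^op. -/

import Mathlib

open CategoryTheory Limits

/-- A morphism `m` is an essential monomorphism if it is a monomorphism and every
morphism `f` such that `m ≫ f` is a monomorphism is itself a monomorphism. -/
def IsEssentialMono {C : Type*} [CategoryTheory.Category C] {S A : C} (m : S ⟶ A) : Prop :=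
  CategoryTheory.Mono m ∧
    ∀ ⦃B : C⦄ (f : A ⟶ B), CategoryTheory.Mono (m ≫ f) → CategoryTheory.Mono f

/-- A morphism `m : S ⟶ A` is a pullback stable essential monomorphism if for every
morphism `u : X ⟶ A` the pullback projection `S ×_A X ⟶ X` of `m` along `u` is an
essential monomorphism. -/
def IsStableEssentialMono {C : Type*} [CategoryTheory.Category C]
    [CategoryTheory.Limits.HasPullbacks C] {S A : C} (m : S ⟶ A) : Prop :=
  ∀ ⦃X : C⦄ (u : X ⟶ A), IsEssentialMono (CategoryTheory.Limits.pullback.snd m u)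

/-- A morphism `e` is an essential epimorphism if it is an epimorphism and every
morphism `f` such that `f ≫ e` is an epimorphism is itself an epimorphism. -/
def IsEssentialEpi {C : Type*} [CategoryTheory.Category C] {A B : C} (e : A ⟶ B) : Prop :=
  CategoryTheory.Epi e ∧
    ∀ ⦃Z : C⦄ (f : Z ⟶ A), CategoryTheory.Epi (f ≫ e) → CategoryTheory.Epi f

/-- A morphism `e : A ⟶ B` is a pushout stable essential epimorphism if for every
morphism `u : A ⟶ Y` the pushout coprojection `Y ⟶ B ⊔_A Y` of `e` along `u` is an
essential epimorphism. -/
def IsStableEssentialEpi {C : Type*} [CategoryTheory.Category C]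
    [CategoryTheory.Limits.HasPushouts C] {A B : C} (e : A ⟶ B) : Prop :=
  ∀ ⦃Y : C⦄ (u : A ⟶ Y), IsEssentialEpi (CategoryTheory.Limits.pushout.inr e u)

/-- The class of pullback stable essential monomorphisms, as a `MorphismProperty`. -/
def stableEssentialMonos (C : Type*) [Category C] [HasPullbacks C] :
    CategoryTheory.MorphismProperty C :=
  fun _ _ m => IsStableEssentialMono m

/-!
`F` inverts exactly the pullback stable essential monomorphisms. If `F f` is invertible then so
is `F` of every pullback of `f`, and a morphism `p` with `F p` invertible is an essential mono
because the faithful `F` reflects monos. Conversely, `F` preserves essential monos (factor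
through the counit, which is invertible as `G` is fully faithful), and every map into `F A` is
of the form `F v` up to the unit of `H ⊣ F`, invertible since `H` is fully faithful along with
`G`. So `F` is the localization of `C` at the morphisms it inverts. The dual situation
`G.op ⊣ F.op ⊣ H.op` satisfies the same hypotheses, since pullback stable essential monos of
`Xᵒᵖ` are pushout stable essential epis of `X`.
-/

section EssentialMorphisms

variable {C : Type*} [Category C]

theorem IsEssentialMono.comp_isIso {P Y Y' : C} {p : P ⟶ Y} (hp : IsEssentialMono p)
    (e : Y ⟶ Y') [IsIso e] : IsEssentialMono (p ≫ e) := by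
  have := hp.1
  refine ⟨mono_comp _ _, fun _ f hf => ?_⟩
  have : Mono (e ≫ f) := hp.2 _ (by simpa using hf)
  simpa using mono_comp (inv e) (e ≫ f)

theorem IsEssentialMono.isIso_comp {P' P Y : C} {p : P ⟶ Y} (e : P' ⟶ P) [IsIso e]
    (hp : IsEssentialMono p) : IsEssentialMono (e ≫ p) := by
  have := hp.1
  refine ⟨mono_comp _ _, fun _ f hf => hp.2 f ?_⟩
  simpa using mono_comp (inv e) ((e ≫ p) ≫ f)

theorem IsEssentialEpi.comp_isIso {P Y Y' : C} {p : P ⟶ Y} (hp : IsEssentialEpi p)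
    (e : Y ⟶ Y') [IsIso e] : IsEssentialEpi (p ≫ e) := by
  have := hp.1
  refine ⟨epi_comp _ _, fun _ f hf => hp.2 f ?_⟩
  simpa using epi_comp (f ≫ p ≫ e) (inv e)

theorem IsEssentialMono.unop {S A : Cᵒᵖ} {m : S ⟶ A} (hm : IsEssentialMono m) :
    IsEssentialEpi m.unop := by
  have := hm.1
  refine ⟨inferInstance, fun _ g hg => ?_⟩
  have : Mono g.op := hm.2 g.op (inferInstanceAs (Mono (g ≫ m.unop).op))
  exact inferInstanceAs (Epi g.op.unop)

theorem IsStableEssentialMono.unop [HasPushouts C] {S A : Cᵒᵖ} {n : S ⟶ A}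
    (hn : IsStableEssentialMono n) : IsStableEssentialEpi n.unop := by
  intro Y u
  have h : pushout.inr n.unop u =
      (pullback.snd n u.op).unop ≫ inv (pullbackIsoOpPushout n u.op).hom.unop := by
    rw [IsIso.eq_comp_inv]
    exact pullbackIsoOpPushout_hom_inr n u.op
  rw [h]
  exact (hn u.op).unop.comp_isIso _

end EssentialMorphisms

section Localization

variable {C X : Type*} [Category C] [Category X]

theorem isEssentialMono_of_isIso_map (F : C ⥤ X) [F.Faithful] [F.PreservesMonomorphisms]
    {P V : C} (p : P ⟶ V) [IsIso (F.map p)] : IsEssentialMono p := by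
  refine ⟨F.mono_of_mono_map inferInstance, fun _ g hg => F.mono_of_mono_map ?_⟩
  simpa using mono_comp (inv (F.map p)) (F.map (p ≫ g))

theorem isStableEssentialMono_of_isIso_map (F : C ⥤ X) [HasPullbacks C] [HasPullbacks X]
    [F.Faithful] [PreservesLimitsOfShape WalkingCospan F] {A B : C} (f : A ⟶ B)
    [IsIso (F.map f)] : IsStableEssentialMono f := by
  intro V u
  have : IsIso (F.map (pullback.snd f u)) := by
    rw [← PreservesPullback.iso_hom_snd F f u]
    infer_instance
  exact isEssentialMono_of_isIso_map F _

theorem CategoryTheory.Adjunction.isEssentialMono_map {F : C ⥤ X} {G : X ⥤ C} (adj : F ⊣ G)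
    [F.Faithful] [F.PreservesMonomorphisms] [G.Full] [G.Faithful] {S A : C} {q : S ⟶ A}
    (hq : IsEssentialMono q) : IsEssentialMono (F.map q) := by
  have := hq.1
  refine ⟨inferInstance, fun Z g hg => ?_⟩
  set h := adj.homEquiv A Z g
  have hg' : F.map h ≫ adj.counit.app Z = g :=
    (adj.homEquiv_counit A Z h).symm.trans ((adj.homEquiv A Z).symm_apply_apply g)
  have : Mono (q ≫ h) := F.mono_of_mono_map (by
    rw [F.map_comp, (IsIso.eq_comp_inv _).2 hg', ← Category.assoc]
    infer_instance)
  have : Mono h := hq.2 h this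
  rw [← hg']
  infer_instance

theorem isStableEssentialMono_map {F : C ⥤ X} {G : X ⥤ C} {H : X ⥤ C} (adj : F ⊣ G)
    (adj' : H ⊣ F) [HasPullbacks C] [HasPullbacks X] [F.Faithful] [G.Full] [G.Faithful]
    [PreservesLimitsOfShape WalkingCospan F] [IsIso adj'.unit]
    {S A : C} {m : S ⟶ A} (hm : IsStableEssentialMono m) :
    IsStableEssentialMono (F.map m) := by
  intro Y u
  set v := (adj'.homEquiv Y A).symm u
  have hu : adj'.unit.app Y ≫ F.map v = u :=
    (adj'.homEquiv_unit Y A v).symm.trans ((adj'.homEquiv Y A).apply_symm_apply u)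
  have hsq : IsPullback (F.map (pullback.fst m v))
      (F.map (pullback.snd m v) ≫ inv (adj'.unit.app Y)) (F.map m) u :=
    ((IsPullback.of_hasPullback m v).map F).of_iso (Iso.refl _) (Iso.refl _)
      (asIso (adj'.unit.app Y)).symm (Iso.refl _) (by simp) (by simp) (by simp) (by simp [← hu])
  rw [← hsq.isoPullback_inv_snd]
  exact ((adj.isEssentialMono_map (hm v)).comp_isIso _).isIso_comp _

theorem stableEssentialMonos_eq_inverseImage {F : C ⥤ X} {G : X ⥤ C} {H : X ⥤ C}
    (adj : F ⊣ G) (adj' : H ⊣ F) [HasPullbacks C] [HasPullbacks X] [F.Faithful]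
    [G.Full] [G.Faithful]
    (hX : ∀ ⦃S A : X⦄ (n : S ⟶ A), IsStableEssentialMono n → IsIso n) :
    stableEssentialMonos C = (MorphismProperty.isomorphisms X).inverseImage F := by
  have : PreservesLimitsOfSize.{0, 0} F := adj'.rightAdjoint_preservesLimits
  have : IsIso adj'.unit :=
    (Adjunction.Triple.mk adj' adj).isIso_unit_iff_isIso_counit.2 inferInstance
  ext A B f
  exact ⟨fun hf => hX _ (isStableEssentialMono_map adj adj' hf),
    fun (_ : IsIso (F.map f)) => isStableEssentialMono_of_isIso_map F f⟩

theorem isLocalization_stableEssentialMonos {F : C ⥤ X} {G : X ⥤ C} {H : X ⥤ C}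
    (adj : F ⊣ G) (adj' : H ⊣ F) [HasPullbacks C] [HasPullbacks X] [F.Faithful]
    [G.Full] [G.Faithful]
    (hX : ∀ ⦃S A : X⦄ (n : S ⟶ A), IsStableEssentialMono n → IsIso n) :
    F.IsLocalization (stableEssentialMonos C) := by
  rw [stableEssentialMonos_eq_inverseImage adj adj' hX]
  exact adj.isLocalization

end Localization

theorem isLocalization_op_general
    {C : Type*} [Category C] {X : Type*} [Category X]
    [HasFiniteLimits C] [HasFiniteLimits X]
    [HasFiniteColimits C] [HasFiniteColimits X]
    (F : C ⥤ X) (G : X ⥤ C) (H : X ⥤ C)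
    (adj : F ⊣ G) [F.Faithful] [G.Full] [G.Faithful]
    (adj' : H ⊣ F)
    (hX : ∀ ⦃S A : X⦄ (n : S ⟶ A), IsStableEssentialMono n → IsIso n)
    (hX' : ∀ ⦃A B : X⦄ (e : A ⟶ B), IsStableEssentialEpi e → IsIso e) :
    F.IsLocalization (stableEssentialMonos C) ∧
      F.op.IsLocalization (stableEssentialMonos Cᵒᵖ) := by
  have hH : H.FullyFaithful :=
    (Adjunction.Triple.mk adj' adj).fullyFaithfulEquiv.symm (.ofFullyFaithful G)
  have := hH.full
  have := hH.faithful
  have hXop : ∀ ⦃S A : Xᵒᵖ⦄ (n : S ⟶ A), IsStableEssentialMono n → IsIso n :=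
    fun _ _ n hn => (isIso_unop_iff n).1 (hX' _ hn.unop)
  exact ⟨isLocalization_stableEssentialMonos adj adj' hX,
    isLocalization_stableEssentialMonos adj'.op adj.op hXop⟩

/-- Let `F : C ⥤ X` be a faithful essential localization such that every pullback stable
essential monomorphism in `X` is an isomorphism, every pushout stable essential
epimorphism in `X` is an isomorphism, and `X` is balanced. Then `F` exhibits `X` as the
category of fractions `Spec(C)` of `C` at the pullback stable essential monomorphisms,
and `F.op : Cᵒᵖ ⥤ Xᵒᵖ` exhibits `Xᵒᵖ` as the category of fractions `Spec(Cᵒᵖ)` of `Cᵒᵖ`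
at the pullback stable essential monomorphisms of `Cᵒᵖ`; consequently
`Spec(C) ≃ X ≃ Spec(Cᵒᵖ)ᵒᵖ`. -/
theorem isLocalization_op
    {C : Type*} [Category C] {X : Type*} [Category X]
    [HasFiniteLimits C] [HasFiniteLimits X]
    [HasFiniteColimits C] [HasFiniteColimits X] [Balanced X]
    (F : C ⥤ X) (G : X ⥤ C) (H : X ⥤ C)
    (adj : F ⊣ G) [PreservesFiniteLimits F] [F.Faithful] [G.Full] [G.Faithful]
    (adj' : H ⊣ F)
    (hX : ∀ ⦃S A : X⦄ (n : S ⟶ A), IsStableEssentialMono n → IsIso n)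
    (hX' : ∀ ⦃A B : X⦄ (e : A ⟶ B), IsStableEssentialEpi e → IsIso e) :
    F.IsLocalization (stableEssentialMonos C) ∧
      F.op.IsLocalization (stableEssentialMonos Cᵒᵖ) :=
  isLocalization_op_general F G H adj adj' hX hX'
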